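/- arXiv:1804.01022 — 6 statements merged into one kernel-verified Lean document; each statement's English description precedes it below -/
import Mathlib

section
/- Let 𝔸 be a complex unital algebra, n ≥ 1, and let A be an n×n lower triangular matrix over 𝔸 (A_{ij} = 0 for i < j). Let λ ∈ ℂ be such that λ·1 − A_{ii} is invertible in 𝔸 for every i. Then the matrix λ·1 − A is invertible, its inverse R is lower triangular, and for i ≥ j the entries of R are given by R_{ij} = ∑ (λ·1 − A_{i₁i₁})⁻¹ A_{i₁i₂} (λ·1 − A_{i₂i₂})⁻¹ A_{i₂i₃} ⋯ A_{i_{m−1}i_m} (λ·1 − A_{i_mi_m})⁻¹, the sum ranging over all chains from i to j; in particular R_{ii} = (λ·1 − A_{ii})⁻¹ and R_{i+1,i} = (λ·1 − A_{i+1,i+1})⁻¹ A_{i+1,i} (λ·1 − A_{ii})⁻¹. -/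
/-!
Write `D i = (λ•1 - A i i)⁻¹` and `F` for the matrix of chain sums. Splitting off the first
step of a chain gives `F i j = D i * ∑_{j ≤ k < i} A i k * F k j`, which is exactly
`(λ•1 - A) * F = 1`. The other identity needs no second combinatorial argument: `F` is itself
lower triangular with invertible diagonal entries `D i`, so the same fact gives it a right
inverse `G`, and `λ•1 - A = G` because a left and a right inverse of `F` agree.
-/

open Finset

/-- The word `D_{i₁} A_{i₁ i₂} D_{i₂} A_{i₂ i₃} ⋯ A_{i_{m-1} i_m} D_{i_m}`
associated to a chain `[i₁, i₂, …, i_m]`, where `D_i` is the resolvent of the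
diagonal block `A_{ii}`. -/
def chainWord {R : Type*} [Ring R] {n : ℕ} (Dinv : Fin n → R)
    (Off : Fin n → Fin n → R) : List (Fin n) → R
  | [] => 1
  | [a] => Dinv a
  | a :: b :: rest => Dinv a * Off a b * chainWord Dinv Off (b :: rest)

section LinearOrder

variable {α : Type*} [LinearOrder α]

theorem Finset.sort_insert_reverse_of_forall_lt {a : α} {t : Finset α} (h : ∀ b ∈ t, b < a) :
    ((insert a t).sort (· ≤ ·)).reverse = a :: (t.sort (· ≤ ·)).reverse := by
  refine List.Pairwise.eq_of_mem_iff (r := (· > ·)) ?_ ?_ fun b => by simp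
  · exact List.pairwise_reverse.2 ((insert a t).sortedLT_sort.pairwise)
  · refine List.pairwise_cons.2 ⟨fun b hb => h b (by simpa using hb), ?_⟩
    exact List.pairwise_reverse.2 t.sortedLT_sort.pairwise

variable [LocallyFiniteOrder α]

/-- The finsets which, listed in decreasing order, are the chains from `i` down to `j`. -/
def chainSets (i j : α) : Finset (Finset α) :=
  (Icc j i).powerset.filter fun s => i ∈ s ∧ j ∈ s

theorem mem_chainSets {i j : α} {s : Finset α} :
    s ∈ chainSets i j ↔ s ⊆ Icc j i ∧ i ∈ s ∧ j ∈ s := by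
  simp [chainSets]

theorem chainSets_self (i : α) : chainSets i i = {{i}} := by
  ext s
  simp only [mem_chainSets, Icc_self, subset_singleton_iff, mem_singleton, and_self]
  constructor
  · rintro ⟨rfl | rfl, hi⟩
    · simp at hi
    · rfl
  · rintro rfl
    simp

theorem chainSets_eq_empty_of_lt {i j : α} (h : i < j) : chainSets i j = ∅ := by
  ext s
  simp only [mem_chainSets, Icc_eq_empty_of_lt h, subset_empty, notMem_empty, iff_false]
  rintro ⟨rfl, hi, -⟩
  simp at hi

theorem notMem_of_mem_chainSets {i j k : α} {t : Finset α} (ht : t ∈ chainSets k j)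
    (hk : k < i) : i ∉ t := fun hi =>
  (mem_Icc.1 ((mem_chainSets.1 ht).1 hi)).2.not_gt hk

theorem chainSets_eq_biUnion {i j : α} (h : j < i) :
    chainSets i j = (Ico j i).biUnion fun k => (chainSets k j).image (insert i) := by
  ext s
  simp only [mem_biUnion, mem_image, mem_Ico, mem_chainSets]
  constructor
  · rintro ⟨hs, hi, hj⟩
    have hjt : j ∈ s.erase i := mem_erase.2 ⟨h.ne, hj⟩
    set k := (s.erase i).max' ⟨j, hjt⟩
    have hk : k ∈ s.erase i := max'_mem _ _
    refine ⟨k, ⟨le_max' _ _ hjt, ?_⟩, s.erase i, ⟨fun x hx => ?_, hk, hjt⟩, insert_erase hi⟩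
    · exact lt_of_le_of_ne (mem_Icc.1 (hs (mem_of_mem_erase hk))).2 (ne_of_mem_erase hk)
    · exact mem_Icc.2 ⟨(mem_Icc.1 (hs (mem_of_mem_erase hx))).1, le_max' _ _ hx⟩
  · rintro ⟨k, ⟨-, hki⟩, t, ⟨ht, -, hj⟩, rfl⟩
    refine ⟨insert_subset (mem_Icc.2 ⟨h.le, le_rfl⟩) fun x hx => ?_, mem_insert_self _ _,
      mem_insert_of_mem hj⟩
    exact Icc_subset_Icc_right hki.le (ht hx)

end LinearOrder

theorem Matrix.mul_apply_eq_sum_Icc {ι R : Type*} [Fintype ι] [LinearOrder ι]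
    [LocallyFiniteOrder ι] [NonUnitalNonAssocSemiring R] {X Y : Matrix ι ι R}
    (hX : ∀ i k, i < k → X i k = 0) (hY : ∀ k j, k < j → Y k j = 0) (i j : ι) :
    (X * Y) i j = ∑ k ∈ Icc j i, X i k * Y k j := by
  rw [Matrix.mul_apply]
  refine (sum_subset (subset_univ _) fun k _ hk => ?_).symm
  rcases not_and_or.1 (mem_Icc.not.1 hk) with hk | hk
  · rw [hY k j (not_le.1 hk), mul_zero]
  · rw [hX i k (not_le.1 hk), zero_mul]

section ChainMatrix

variable {R : Type*} [Ring R] {n : ℕ} {D : Fin n → R} {O : Fin n → Fin n → R}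

variable (D O) in
def chainMatrix : Matrix (Fin n) (Fin n) R :=
  Matrix.of fun i j => ∑ s ∈ chainSets i j, chainWord D O ((s.sort (· ≤ ·)).reverse)

theorem chainMatrix_apply_self (i : Fin n) : chainMatrix D O i i = D i := by
  simp only [chainMatrix, Matrix.of_apply, chainSets_self, sum_singleton, sort_singleton,
    List.reverse_singleton, chainWord]

theorem chainMatrix_apply_of_lt {i j : Fin n} (h : i < j) : chainMatrix D O i j = 0 := by
  simp only [chainMatrix, Matrix.of_apply, chainSets_eq_empty_of_lt h, sum_empty]

theorem chainWord_insert {i k : Fin n} {t : Finset (Fin n)} (hk : k ∈ t)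
    (ht : ∀ b ∈ t, b ≤ k) (hki : k < i) :
    chainWord D O (((insert i t).sort (· ≤ ·)).reverse)
      = D i * O i k * chainWord D O ((t.sort (· ≤ ·)).reverse) := by
  have hsort : (t.sort (· ≤ ·)).reverse = k :: ((t.erase k).sort (· ≤ ·)).reverse := by
    conv_lhs => rw [← insert_erase hk]
    exact sort_insert_reverse_of_forall_lt fun b hb =>
      lt_of_le_of_ne (ht b (mem_of_mem_erase hb)) (ne_of_mem_erase hb)
  rw [sort_insert_reverse_of_forall_lt fun b hb => (ht b hb).trans_lt hki, hsort]
  rfl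

theorem chainMatrix_apply_of_gt {i j : Fin n} (h : j < i) :
    chainMatrix D O i j = D i * ∑ k ∈ Ico j i, O i k * chainMatrix D O k j := by
  have hinj : ∀ k ∈ Ico j i, Set.InjOn (insert i) (chainSets k j : Set (Finset (Fin n))) :=
    fun k hk t ht t' ht' htt' => by
      rw [← erase_insert (notMem_of_mem_chainSets ht (mem_Ico.1 hk).2),
        ← erase_insert (notMem_of_mem_chainSets ht' (mem_Ico.1 hk).2), htt']
  have hdisj : (Ico j i : Set (Fin n)).PairwiseDisjoint
      fun k => (chainSets k j).image (insert i) := by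
    intro k hk k' hk' hne
    refine disjoint_left.2 fun s hs hs' => hne ?_
    obtain ⟨t, ht, rfl⟩ := mem_image.1 hs
    obtain ⟨t', ht', htt'⟩ := mem_image.1 hs'
    obtain rfl : t' = t := by
      rw [← erase_insert (notMem_of_mem_chainSets ht (mem_Ico.1 hk).2),
        ← erase_insert (notMem_of_mem_chainSets ht' (mem_Ico.1 hk').2), htt']
    obtain ⟨hsub, hkt, -⟩ := mem_chainSets.1 ht
    obtain ⟨hsub', hkt', -⟩ := mem_chainSets.1 ht'
    exact le_antisymm (mem_Icc.1 (hsub' hkt)).2 (mem_Icc.1 (hsub hkt')).2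
  simp only [chainMatrix, Matrix.of_apply]
  rw [chainSets_eq_biUnion h, sum_biUnion hdisj, mul_sum]
  refine sum_congr rfl fun k hk => ?_
  rw [sum_image (hinj k hk), mul_sum, mul_sum]
  refine sum_congr rfl fun t ht => ?_
  obtain ⟨hsub, hkt, -⟩ := mem_chainSets.1 ht
  rw [chainWord_insert hkt (fun b hb => (mem_Icc.1 (hsub hb)).2) (mem_Ico.1 hk).2, mul_assoc]

theorem mul_chainMatrix_eq_one {B : Matrix (Fin n) (Fin n) R} (hB : ∀ i j, i < j → B i j = 0)
    (hBO : ∀ i j, j < i → B i j = -O i j) (hD : ∀ i, B i i * D i = 1) :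
    B * chainMatrix D O = 1 := by
  ext i j
  rw [Matrix.mul_apply_eq_sum_Icc hB (fun _ _ => chainMatrix_apply_of_lt), Matrix.one_apply]
  rcases lt_trichotomy i j with h | rfl | h
  · rw [Icc_eq_empty_of_lt h, sum_empty, if_neg h.ne]
  · rw [Icc_self, sum_singleton, chainMatrix_apply_self, hD, if_pos rfl]
  · have hoff : ∑ k ∈ Ico j i, B i k * chainMatrix D O k j
        = -∑ k ∈ Ico j i, O i k * chainMatrix D O k j := by
      rw [← sum_neg_distrib]
      exact sum_congr rfl fun k hk => by rw [hBO i k (mem_Ico.1 hk).2, neg_mul]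
    rw [← Ico_insert_right h.le, sum_insert right_notMem_Ico, hoff, if_neg h.ne',
      chainMatrix_apply_of_gt h, ← mul_assoc, hD, one_mul, add_neg_cancel]

theorem chainMatrix_mul_eq_one {B : Matrix (Fin n) (Fin n) R} (hB : ∀ i j, i < j → B i j = 0)
    (hBO : ∀ i j, j < i → B i j = -O i j) (hD : ∀ i, B i i * D i = 1)
    (hD' : ∀ i, D i * B i i = 1) :
    chainMatrix D O * B = 1 := by
  have hFG : chainMatrix D O * chainMatrix (fun i => B i i) (-chainMatrix D O) = 1 :=
    mul_chainMatrix_eq_one (fun _ _ => chainMatrix_apply_of_lt) (fun _ _ _ => (neg_neg _).symm)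
      fun i => by rw [chainMatrix_apply_self, hD']
  rwa [← left_inv_eq_right_inv (mul_chainMatrix_eq_one hB hBO hD) hFG] at hFG

end ChainMatrix

theorem stmt_2_general {𝔸 : Type*} [Ring 𝔸] [Algebra ℂ 𝔸] (n : ℕ)
    (A : Matrix (Fin n) (Fin n) 𝔸)
    (htri : ∀ i j : Fin n, i < j → A i j = 0)
    (lam : ℂ)
    (Rdiag : Fin n → 𝔸)
    (hRdiag : ∀ i : Fin n, (lam • (1 : 𝔸) - A i i) * Rdiag i = 1 ∧
      Rdiag i * (lam • (1 : 𝔸) - A i i) = 1)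
    (R : Matrix (Fin n) (Fin n) 𝔸)
    (hRtri : ∀ i j : Fin n, i < j → R i j = 0)
    (hR : ∀ i j : Fin n, j ≤ i →
      R i j = ∑ s ∈ (Finset.Icc j i).powerset.filter (fun s => i ∈ s ∧ j ∈ s),
        chainWord Rdiag A ((s.sort (· ≤ ·)).reverse)) :
    (lam • (1 : Matrix (Fin n) (Fin n) 𝔸) - A) * R = 1 ∧
      R * (lam • (1 : Matrix (Fin n) (Fin n) 𝔸) - A) = 1 ∧
      (∀ i : Fin n, R i i = Rdiag i) := by
  obtain rfl : R = chainMatrix Rdiag A := by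
    ext i j
    rcases le_or_gt j i with h | h
    · exact hR i j h
    · exact (hRtri i j h).trans (chainMatrix_apply_of_lt h).symm
  have hupper : ∀ i j, i < j → (lam • (1 : Matrix (Fin n) (Fin n) 𝔸) - A) i j = 0 := by
    intro i j h
    simp [h.ne, htri i j h]
  have hlower : ∀ i j, j < i → (lam • (1 : Matrix (Fin n) (Fin n) 𝔸) - A) i j = -A i j := by
    intro i j h
    simp [h.ne']
  have hdiag : ∀ i, (lam • (1 : Matrix (Fin n) (Fin n) 𝔸) - A) i i = lam • 1 - A i i := by
    simp
  exact ⟨mul_chainMatrix_eq_one hupper hlower fun i => hdiag i ▸ (hRdiag i).1,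
    chainMatrix_mul_eq_one hupper hlower (fun i => hdiag i ▸ (hRdiag i).1)
      (fun i => hdiag i ▸ (hRdiag i).2),
    chainMatrix_apply_self⟩

/-- If `A` is a lower triangular matrix over a complex unital algebra `𝔸` and
`λ·1 − A_{ii}` is invertible for every `i`, then `λ·1 − A` is invertible, its inverse
is lower triangular, and for `i ≥ j` the entries of the inverse are the sums over all
decreasing chains `i = i₁ > i₂ > ⋯ > i_m = j` of the words
`(λ1−A_{i₁i₁})⁻¹ A_{i₁i₂} (λ1−A_{i₂i₂})⁻¹ ⋯ A_{i_{m-1}i_m} (λ1−A_{i_mi_m})⁻¹`. -/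
theorem stmt_2 {𝔸 : Type*} [Ring 𝔸] [Algebra ℂ 𝔸] (n : ℕ) (hn : 1 ≤ n)
    (A : Matrix (Fin n) (Fin n) 𝔸)
    (htri : ∀ i j : Fin n, i < j → A i j = 0)
    (lam : ℂ)
    (Rdiag : Fin n → 𝔸)
    (hRdiag : ∀ i : Fin n, (lam • (1 : 𝔸) - A i i) * Rdiag i = 1 ∧
      Rdiag i * (lam • (1 : 𝔸) - A i i) = 1)
    (R : Matrix (Fin n) (Fin n) 𝔸)
    (hRtri : ∀ i j : Fin n, i < j → R i j = 0)
    (hR : ∀ i j : Fin n, j ≤ i →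
      R i j = ∑ s ∈ (Finset.Icc j i).powerset.filter (fun s => i ∈ s ∧ j ∈ s),
        chainWord Rdiag A ((s.sort (· ≤ ·)).reverse)) :
    (lam • (1 : Matrix (Fin n) (Fin n) 𝔸) - A) * R = 1 ∧
      R * (lam • (1 : Matrix (Fin n) (Fin n) 𝔸) - A) = 1 ∧
      (∀ i : Fin n, R i i = Rdiag i) :=
  stmt_2_general n A htri lam Rdiag hRdiag R hRtri hR
end

section
/- Let n ≥ 1 and let λ₀, λ₁, …, λₙ be pairwise distinct complex numbers. For 1 ≤ r ≤ n define h_r(t) = ∑_{j=0}^{r} e^{λⱼ t} · ∏_{0 ≤ k ≤ r, k≠j} (λⱼ − λₖ)⁻¹ and h_0(t) = e^{λ₀ t}. Then for every t > 0, ∫_{0}^{t} h_{n−1}(s) · e^{λₙ (t−s)} ds = h_n(t). (Equivalently, for t > 0 the (n)-th divided difference of exp_{+,t} at λ₀, …, λₙ equals the (n+1)-fold convolution exp_{+,·}(λ₀) ∗ ⋯ ∗ exp_{+,·}(λₙ) evaluated at t.) -/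
/-!
Expanding `h_{n-1}` as a sum of exponentials, the `j`-th term of the convolution integrates to
`w_j (e^{λ_j t} - e^{λ_n t}) / (λ_j - λ_n)`, where `w_j = ∏_{k<n, k≠j} (λ_j - λ_k)⁻¹`. Summing over
`j` gives `h_n(t)` by the recurrence for divided differences, whose only nontrivial input is that
the divided difference of a constant vanishes: `∑_{j≤n} ∏_{k≠j} (λ_j - λ_k)⁻¹ = 0`.
-/

open Finset

/-- `hfun lam r t` is the `r`-th divided difference of `exp_{+,t}` at the points
`lam 0, …, lam r` (for pairwise distinct points and `t > 0`):
`∑_{j=0}^{r} e^{lam j · t} ∏_{k ≤ r, k ≠ j} (lam j − lam k)⁻¹`. -/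
noncomputable def hfun (lam : ℕ → ℂ) (r : ℕ) (t : ℝ) : ℂ :=
  ∑ j ∈ Finset.range (r + 1),
    Complex.exp (lam j * t) * ∏ k ∈ (Finset.range (r + 1)).erase j, (lam j - lam k)⁻¹

/-- Compare the `(#s - 1)`-th coefficients of `1` and of its Lagrange interpolant. -/
theorem Lagrange.sum_prod_inv_sub_eq_zero {F ι : Type*} [Field F] [DecidableEq ι]
    {s : Finset ι} {v : ι → F} (hvs : Set.InjOn v s) (hs : 1 < #s) :
    ∑ i ∈ s, ∏ j ∈ s.erase i, (v i - v j)⁻¹ = 0 := by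
  have h := Lagrange.coeff_eq_sum hvs (P := 1) (by
    rw [Polynomial.degree_one]; exact_mod_cast zero_lt_one.trans hs)
  rw [Polynomial.coeff_one, if_neg (by omega)] at h
  simpa [prod_inv_distrib, div_eq_mul_inv] using h.symm

/-- The recurrence for divided differences, with the node `a` split off. -/
theorem Lagrange.sum_mul_prod_inv_sub_insert {F ι : Type*} [Field F] [DecidableEq ι]
    {s : Finset ι} {a : ι} (ha : a ∉ s) (hs : s.Nonempty) {v : ι → F}
    (hvs : Set.InjOn v (insert a s : Finset ι)) (y : ι → F) :
    ∑ j ∈ insert a s, y j * ∏ k ∈ (insert a s).erase j, (v j - v k)⁻¹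
      = ∑ j ∈ s, (∏ k ∈ s.erase j, (v j - v k)⁻¹) * ((y j - y a) / (v j - v a)) := by
  have hweight : ∀ j ∈ s, ∏ k ∈ (insert a s).erase j, (v j - v k)⁻¹
      = (∏ k ∈ s.erase j, (v j - v k)⁻¹) * (v j - v a)⁻¹ := fun j hj => by
    rw [erase_insert_of_ne (ne_of_mem_of_not_mem hj ha).symm,
      prod_insert (fun h => ha (mem_of_mem_erase h)), mul_comm]
  have hzero := sum_prod_inv_sub_eq_zero hvs (by rw [card_insert_of_notMem ha]; simpa using hs)
  rw [sum_insert ha] at hzero ⊢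
  have hterm : ∀ j ∈ s, (∏ k ∈ s.erase j, (v j - v k)⁻¹) * ((y j - y a) / (v j - v a))
      = y j * ∏ k ∈ (insert a s).erase j, (v j - v k)⁻¹
        - y a * ∏ k ∈ (insert a s).erase j, (v j - v k)⁻¹ := fun j hj => by
    rw [hweight j hj]; ring
  rw [sum_congr rfl hterm, sum_sub_distrib, ← mul_sum]
  linear_combination y a * hzero

theorem integral_exp_mul_mul_exp_mul_sub {a b : ℂ} (hab : a ≠ b) (t : ℝ) :
    ∫ s in (0 : ℝ)..t, Complex.exp (a * s) * Complex.exp (b * (t - s))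
      = (Complex.exp (a * t) - Complex.exp (b * t)) / (a - b) := by
  have hsplit : ∀ s : ℝ, Complex.exp (a * s) * Complex.exp (b * (t - s))
      = Complex.exp (b * t) * Complex.exp ((a - b) * s) := fun s => by
    rw [← Complex.exp_add, ← Complex.exp_add]; ring_nf
  simp_rw [hsplit, intervalIntegral.integral_const_mul,
    integral_exp_mul_complex (sub_ne_zero.mpr hab)]
  simp only [Complex.ofReal_zero, mul_zero, Complex.exp_zero]
  rw [mul_div_assoc', mul_sub, ← Complex.exp_add, mul_one]
  ring_nf

theorem integral_hfun_mul_exp (lam : ℕ → ℂ) (r : ℕ) {μ : ℂ} (hμ : ∀ j ≤ r, lam j ≠ μ) (t : ℝ) :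
    ∫ s in (0 : ℝ)..t, hfun lam r s * Complex.exp (μ * (t - s))
      = ∑ j ∈ range (r + 1), (∏ k ∈ (range (r + 1)).erase j, (lam j - lam k)⁻¹)
          * ((Complex.exp (lam j * t) - Complex.exp (μ * t)) / (lam j - μ)) := by
  simp_rw [hfun, sum_mul]
  rw [intervalIntegral.integral_finsetSum fun j _ => by
    apply Continuous.intervalIntegrable; fun_prop]
  refine sum_congr rfl fun j hj => ?_
  simp_rw [mul_right_comm _ (∏ k ∈ (range (r + 1)).erase j, (lam j - lam k)⁻¹),
    intervalIntegral.integral_mul_const,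
    integral_exp_mul_mul_exp_mul_sub (hμ j (mem_range_succ_iff.mp hj)), mul_comm]

theorem stmt_9_general (n : ℕ) (hn : 1 ≤ n) (lam : ℕ → ℂ)
    (hdist : ∀ j k : ℕ, j ≤ n → k ≤ n → j ≠ k → lam j ≠ lam k)
    (t : ℝ) :
    ∫ s in (0 : ℝ)..t, hfun lam (n - 1) s * Complex.exp (lam n * (t - s))
      = hfun lam n t := by
  obtain ⟨m, rfl⟩ : ∃ m, n = m + 1 := ⟨n - 1, by omega⟩
  have hinj : Set.InjOn lam (insert (m + 1) (range (m + 1)) : Finset ℕ) := by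
    intro j hj k hk hjk
    rw [← range_add_one, coe_range, Set.mem_Iio] at hj hk
    by_contra hne
    exact hdist j k (by omega) (by omega) hne hjk
  rw [Nat.add_sub_cancel, integral_hfun_mul_exp lam m (fun j hj => hdist j (m + 1) (by omega)
    le_rfl (by omega)), hfun, range_add_one (n := m + 1),
    Lagrange.sum_mul_prod_inv_sub_insert (by simp) nonempty_range_add_one hinj]

/-- For pairwise distinct `λ₀, …, λₙ` and `t > 0`, the convolution of the
`(n−1)`-th divided difference of `exp_{+,·}` at `λ₀, …, λ_{n−1}` with
`exp_{+,·}(λₙ)` equals the `n`-th divided difference at `λ₀, …, λₙ`; i.e. the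
`n`-th divided difference of `exp_{+,t}` is the `(n+1)`-fold convolution
`exp_{+,·}(λ₀) ∗ ⋯ ∗ exp_{+,·}(λₙ)`. -/
theorem stmt_9 (n : ℕ) (hn : 1 ≤ n) (lam : ℕ → ℂ)
    (hdist : ∀ j k : ℕ, j ≤ n → k ≤ n → j ≠ k → lam j ≠ lam k)
    (t : ℝ) (ht : 0 < t) :
    ∫ s in (0 : ℝ)..t, hfun lam (n - 1) s * Complex.exp (lam n * (t - s))
      = hfun lam n t :=
  stmt_9_general n hn lam hdist t
end

section
/- Let λ₁, λ₂ ∈ ℂ with Re λ₁ ≠ 0, Re λ₂ ≠ 0, and λ₁ ≠ λ₂, and let t ∈ ℝ, t ≠ 0. Then the integral ∫_{−∞}^{∞} g_s(λ₁) g_{t−s}(λ₂) ds converges absolutely and equals (g_t(λ₁) − g_t(λ₂))/(λ₁ − λ₂). -/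
/-!
On its support the integrand is `±e^{λ₁ s} e^{λ₂ (t - s)} = ±e^{λ₂ t} e^{(λ₁ - λ₂) s}`, and the
support is `(0, t)` if `Re λ₁, Re λ₂ < 0` and `(max 0 t, ∞)` if `Re λ₁ < 0 < Re λ₂`; integrating
the exponential gives the divided difference. Since `g_{-s}(-λ) = -g_s(λ)`, the substitution
`s ↦ -s` reduces the two remaining sign patterns of `(Re λ₁, Re λ₂)` to these.
-/

open MeasureTheory

/-- The kernel of Green's function of the bounded solutions problem:
`g t λ = e^{λt}` if `t > 0` and `Re λ < 0`, `g t λ = −e^{λt}` if `t < 0` and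
`Re λ > 0`, and `g t λ = 0` otherwise. -/
noncomputable def g (t : ℝ) (lam : ℂ) : ℂ :=
  if 0 < t ∧ lam.re < 0 then Complex.exp (lam * t)
  else if t < 0 ∧ 0 < lam.re then -Complex.exp (lam * t)
  else 0

open Set Complex

lemma g_neg_neg (s : ℝ) (lam : ℂ) : g (-s) (-lam) = -g s lam := by
  unfold g
  simp only [neg_pos, neg_lt_zero, neg_re, ofReal_neg, neg_mul_neg]
  split_ifs <;> first | rfl | simp | linarith

lemma g_of_re_neg {lam : ℂ} (h : lam.re < 0) (s : ℝ) :
    g s lam = if 0 < s then exp (lam * s) else 0 := by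
  simp [g, h, h.not_gt]

lemma g_of_re_pos {lam : ℂ} (h : 0 < lam.re) (s : ℝ) :
    g s lam = if s < 0 then -exp (lam * s) else 0 := by
  simp [g, h, h.not_gt]

lemma exp_mul_mul_exp_mul_sub (lam1 lam2 : ℂ) (s t : ℝ) :
    exp (lam1 * s) * exp (lam2 * (t - s)) = exp (lam2 * t) * exp ((lam1 - lam2) * s) := by
  rw [← exp_add, ← exp_add]
  ring_nf

/-- The resolvent identity `R(λ₁) R(λ₂) = (R(λ₁) - R(λ₂)) / (λ₁ - λ₂)` for `R(λ) = (d/dt - λ)⁻¹`,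
written for the kernels `g(λ)` at the time `t`. -/
def ResolventIdentityAt (lam1 lam2 : ℂ) (t : ℝ) : Prop :=
  Integrable (fun s : ℝ => g s lam1 * g (t - s) lam2) ∧
    ∫ s : ℝ, g s lam1 * g (t - s) lam2 = (g t lam1 - g t lam2) / (lam1 - lam2)

lemma ResolventIdentityAt.of_neg {lam1 lam2 : ℂ} {t : ℝ}
    (h : ResolventIdentityAt (-lam1) (-lam2) (-t)) : ResolventIdentityAt lam1 lam2 t := by
  have reflect : (fun s : ℝ => g s lam1 * g (t - s) lam2) =
      fun s => g (-s) (-lam1) * g (-t - -s) (-lam2) := by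
    funext s
    rw [← neg_sub', g_neg_neg, g_neg_neg, neg_mul_neg]
  obtain ⟨hint, hval⟩ := h
  refine ⟨reflect ▸ hint.comp_neg, ?_⟩
  rw [reflect, integral_neg_eq_self (fun s => g s (-lam1) * g (-t - s) (-lam2)), hval,
    g_neg_neg, g_neg_neg, ← neg_sub', neg_sub_neg, ← neg_sub lam1, neg_div_neg_eq]

lemma g_mul_g_sub_eq_indicator_of_re_neg_of_re_neg {lam1 lam2 : ℂ} (h1 : lam1.re < 0)
    (h2 : lam2.re < 0) (t s : ℝ) :
    g s lam1 * g (t - s) lam2 =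
      (Ioo 0 t).indicator (fun s : ℝ => exp (lam2 * t) * exp ((lam1 - lam2) * s)) s := by
  by_cases hs : 0 < s <;> by_cases hts : s < t <;>
    simp [g_of_re_neg, h1, h2, hs, hts, exp_mul_mul_exp_mul_sub]

lemma g_mul_g_sub_eq_indicator_of_re_neg_of_re_pos {lam1 lam2 : ℂ} (h1 : lam1.re < 0)
    (h2 : 0 < lam2.re) (t s : ℝ) :
    g s lam1 * g (t - s) lam2 =
      (Ioi (max 0 t)).indicator (fun s : ℝ => -(exp (lam2 * t) * exp ((lam1 - lam2) * s))) s := by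
  by_cases hs : 0 < s <;> by_cases hts : t < s <;>
    simp [g_of_re_neg, g_of_re_pos, h1, h2, hs, hts, exp_mul_mul_exp_mul_sub]

lemma resolventIdentityAt_of_re_neg_of_re_neg {lam1 lam2 : ℂ} (h1 : lam1.re < 0)
    (h2 : lam2.re < 0) (hne : lam1 ≠ lam2) (t : ℝ) : ResolventIdentityAt lam1 lam2 t := by
  have hd : lam1 - lam2 ≠ 0 := sub_ne_zero.mpr hne
  unfold ResolventIdentityAt
  simp_rw [g_mul_g_sub_eq_indicator_of_re_neg_of_re_neg h1 h2 t]
  rw [integrable_indicator_iff measurableSet_Ioo, integral_indicator measurableSet_Ioo]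
  refine ⟨(Continuous.integrableOn_Ioc (by fun_prop)).mono_set Ioo_subset_Ioc_self, ?_⟩
  rcases le_or_gt t 0 with ht | ht
  · simp [g_of_re_neg, h1, h2, ht.not_gt]
  · rw [← integral_Ioc_eq_integral_Ioo, ← intervalIntegral.integral_of_le ht.le,
      intervalIntegral.integral_const_mul, integral_exp_mul_complex hd,
      g_of_re_neg h1, g_of_re_neg h2, if_pos ht, if_pos ht, ofReal_zero, mul_zero, exp_zero,
      mul_div_assoc', mul_sub, mul_one, ← exp_add]
    ring_nf

lemma resolventIdentityAt_of_re_neg_of_re_pos {lam1 lam2 : ℂ} (h1 : lam1.re < 0)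
    (h2 : 0 < lam2.re) {t : ℝ} (ht : t ≠ 0) : ResolventIdentityAt lam1 lam2 t := by
  have hre : (lam1 - lam2).re < 0 := by rw [sub_re]; linarith
  unfold ResolventIdentityAt
  simp_rw [g_mul_g_sub_eq_indicator_of_re_neg_of_re_pos h1 h2 t]
  rw [integrable_indicator_iff measurableSet_Ioi, integral_indicator measurableSet_Ioi,
    integral_neg, integral_const_mul, integral_exp_mul_complex_Ioi hre]
  refine ⟨((integrableOn_exp_mul_complex_Ioi hre _).const_mul _).neg, ?_⟩
  rcases ht.lt_or_gt with ht | ht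
  · rw [max_eq_left ht.le, g_of_re_neg h1, g_of_re_pos h2, if_neg ht.not_gt, if_pos ht]
    simp [div_eq_mul_inv]
  · rw [max_eq_right ht.le, g_of_re_neg h1, g_of_re_pos h2, if_pos ht, if_neg ht.not_gt,
      neg_div, mul_neg, neg_neg, mul_div_assoc', ← exp_add, sub_zero]
    ring_nf

/-- For `Re λ₁ ≠ 0`, `Re λ₂ ≠ 0`, `λ₁ ≠ λ₂` and `t ≠ 0`, the convolution
`∫_{−∞}^{∞} g_s(λ₁) g_{t−s}(λ₂) ds` converges absolutely and equals the first
divided difference `(g_t(λ₁) − g_t(λ₂))/(λ₁ − λ₂)`. -/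
theorem stmt_11 (lam1 lam2 : ℂ) (h1 : lam1.re ≠ 0) (h2 : lam2.re ≠ 0)
    (hne : lam1 ≠ lam2) (t : ℝ) (ht : t ≠ 0) :
    Integrable (fun s : ℝ => g s lam1 * g (t - s) lam2) ∧
    ∫ s : ℝ, g s lam1 * g (t - s) lam2 = (g t lam1 - g t lam2) / (lam1 - lam2) := by
  change ResolventIdentityAt lam1 lam2 t
  have hne' : -lam1 ≠ -lam2 := neg_injective.ne hne
  have ht' : -t ≠ 0 := neg_ne_zero.mpr ht
  rcases h1.lt_or_gt with h1 | h1 <;> rcases h2.lt_or_gt with h2 | h2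
  · exact resolventIdentityAt_of_re_neg_of_re_neg h1 h2 hne t
  · exact resolventIdentityAt_of_re_neg_of_re_pos h1 h2 ht
  · exact .of_neg (resolventIdentityAt_of_re_neg_of_re_pos (by simpa) (by simpa) ht')
  · exact .of_neg (resolventIdentityAt_of_re_neg_of_re_neg (by simpa) (by simpa) hne' _)
end

section
/- Let λ ∈ ℂ with Re λ ≠ 0 and let f : ℝ → ℂ be continuous and bounded. Then the function x(t) = ∫_{−∞}^{∞} g_s(λ) f(t−s) ds is well defined (the integral converges absolutely for each t), is bounded on ℝ, is differentiable at every t ∈ ℝ with x′(t) = λ x(t) + f(t); moreover, x is the unique bounded solution: if y : ℝ → ℂ is bounded and differentiable with y′(t) = λ y(t) + f(t) for all t, then y = x. -/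
/-!
For `Re λ < 0` the substitution `u = t - s` gives `x t = e^{λt} ∫_{-∞}^t e^{-λu} f u du`, which the
fundamental theorem of calculus differentiates. The case `Re λ > 0` reduces to this one through
`g_{-s}(-λ) = -g_s(λ)`, which turns `x` into `t ↦ -x̃(-t)` with `x̃` built from `-λ` and `f(-·)`.
The difference of two bounded solutions solves `z' = λz`, so it is `e^{λt} z 0`, and this is
bounded only if `z 0 = 0`.
-/

open MeasureTheory

open Set Complex

lemma g_of_re_neg_s16 {lam : ℂ} (h : lam.re < 0) (s : ℝ) :
    g s lam = (Ioi 0).indicator (fun s : ℝ => cexp (lam * s)) s := by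
  simp only [g, indicator, mem_Ioi, h, and_true, h.not_gt, and_false, if_false]

lemma integrable_g_of_re_neg {lam : ℂ} (h : lam.re < 0) : Integrable (fun s => g s lam) := by
  simp only [g_of_re_neg_s16 h]
  exact (integrable_indicator_iff measurableSet_Ioi).2 (integrableOn_exp_mul_complex_Ioi h 0)

lemma integrable_g {lam : ℂ} (h : lam.re ≠ 0) : Integrable (fun s => g s lam) := by
  rcases h.lt_or_gt with hneg | hpos
  · exact integrable_g_of_re_neg hneg
  · have hreflect : (fun s => g s lam) = fun s => -g (-s) (-lam) := by
      funext s
      rw [g_neg_neg, neg_neg]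
    rw [hreflect]
    exact (integrable_g_of_re_neg (lam := -lam) (by simpa using hpos)).comp_neg.neg

section Convolution

variable {k f : ℝ → ℂ} {C : ℝ}

lemma integrable_mul_comp_sub (hk : Integrable k) (hf : Continuous f) (hfb : ∀ t, ‖f t‖ ≤ C)
    (t : ℝ) : Integrable (fun s => k s * f (t - s)) :=
  hk.mul_bdd (hf.comp (continuous_sub_left t)).aestronglyMeasurable (ae_of_all _ fun _ => hfb _)

lemma norm_integral_mul_comp_sub_le (hk : Integrable k) (hfb : ∀ t, ‖f t‖ ≤ C) (t : ℝ) :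
    ‖∫ s, k s * f (t - s)‖ ≤ (∫ s, ‖k s‖) * C := by
  rw [← integral_mul_const]
  refine norm_integral_le_of_norm_le (hk.norm.mul_const C) (ae_of_all _ fun s => ?_)
  rw [norm_mul]
  exact mul_le_mul_of_nonneg_left (hfb _) (norm_nonneg _)

end Convolution

lemma hasDerivAt_integral_Iic {E : Type*} [NormedAddCommGroup E] [NormedSpace ℝ E]
    [CompleteSpace E] {h : ℝ → E} (hc : Continuous h) (hi : ∀ a, IntegrableOn h (Iic a))
    (t : ℝ) : HasDerivAt (fun t => ∫ u in Iic t, h u) (h t) t := by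
  have hsplit :
      (fun t => ∫ u in Iic t, h u) = fun t => (∫ u in Iic 0, h u) + ∫ u in 0..t, h u := by
    funext t
    rw [← intervalIntegral.integral_Iic_sub_Iic (hi 0) (hi t), add_sub_cancel]
  rw [hsplit]
  exact (hc.integral_hasStrictDerivAt 0 t).hasDerivAt.const_add _

noncomputable def greenIntegral (lam : ℂ) (f : ℝ → ℂ) (t : ℝ) : ℂ :=
  ∫ s, g s lam * f (t - s)

variable {lam : ℂ} {f : ℝ → ℂ} {C : ℝ}

lemma greenIntegral_eq_of_re_neg (h : lam.re < 0) (t : ℝ) :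
    greenIntegral lam f t = cexp (lam * t) * ∫ u in Iic t, cexp (-lam * u) * f u := by
  have hpt : ∀ u : ℝ, g (t - u) lam * f u =
      (Iio t).indicator (fun u : ℝ => cexp (lam * t) * (cexp (-lam * u) * f u)) u := by
    intro u
    by_cases hu : u < t
    · rw [g_of_re_neg_s16 h, indicator_of_mem (show t - u ∈ Ioi 0 by simpa using hu),
        indicator_of_mem (show u ∈ Iio t from hu), ← mul_assoc, ← Complex.exp_add]
      push_cast
      ring_nf
    · rw [g_of_re_neg_s16 h, indicator_of_notMem (show t - u ∉ Ioi 0 by simpa using hu),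
        indicator_of_notMem (show u ∉ Iio t from hu), zero_mul]
  rw [greenIntegral, ← integral_sub_left_eq_self _ volume t]
  simp only [sub_sub_cancel, hpt, integral_indicator measurableSet_Iio, integral_const_mul,
    integral_Iic_eq_integral_Iio]

lemma hasDerivAt_greenIntegral_of_re_neg (h : lam.re < 0) (hf : Continuous f)
    (hfb : ∀ t, ‖f t‖ ≤ C) (t : ℝ) :
    HasDerivAt (greenIntegral lam f) (lam * greenIntegral lam f t + f t) t := by
  have hc : Continuous fun u : ℝ => cexp (-lam * u) * f u := by fun_prop
  have hi : ∀ a, IntegrableOn (fun u : ℝ => cexp (-lam * u) * f u) (Iic a) := fun a =>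
    (integrableOn_exp_mul_complex_Iic (by simpa using h) a).mul_bdd hf.aestronglyMeasurable
      (ae_of_all _ fun _ => hfb _)
  have hexp : HasDerivAt (fun t : ℝ => cexp (lam * t)) (cexp (lam * t) * lam) t := by
    simpa using ((hasDerivAt_id t).ofReal_comp.const_mul lam).cexp
  rw [funext (greenIntegral_eq_of_re_neg (f := f) h)]
  refine (hexp.mul (hasDerivAt_integral_Iic hc hi t)).congr_deriv ?_
  rw [← mul_assoc, ← Complex.exp_add, show lam * (t : ℂ) + -lam * t = 0 by ring, Complex.exp_zero]
  ring

lemma greenIntegral_eq_neg_greenIntegral_neg (t : ℝ) :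
    greenIntegral lam f t = -greenIntegral (-lam) (fun u => f (-u)) (-t) := by
  rw [greenIntegral, greenIntegral, ← integral_neg_eq_self, ← integral_neg]
  congr 1
  funext s
  rw [← neg_neg lam, g_neg_neg, neg_neg]
  ring_nf

lemma hasDerivAt_greenIntegral (h : lam.re ≠ 0) (hf : Continuous f) (hfb : ∀ t, ‖f t‖ ≤ C)
    (t : ℝ) : HasDerivAt (greenIntegral lam f) (lam * greenIntegral lam f t + f t) t := by
  rcases h.lt_or_gt with hneg | hpos
  · exact hasDerivAt_greenIntegral_of_re_neg hneg hf hfb t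
  · have hreflect := hasDerivAt_greenIntegral_of_re_neg (lam := -lam) (by simpa using hpos)
      (f := fun u => f (-u)) (hf.comp continuous_neg) (fun _ => hfb _) (-t)
    rw [funext (greenIntegral_eq_neg_greenIntegral_neg (lam := lam) (f := f))]
    refine (hreflect.scomp t (hasDerivAt_neg t)).neg.congr_deriv ?_
    simp only [neg_smul, one_smul, neg_neg]
    ring

section LinearODE

variable {z : ℝ → ℂ}

lemma eq_exp_mul_of_hasDerivAt (hz : ∀ t, HasDerivAt z (lam * z t) t) (t : ℝ) :
    z t = cexp (lam * t) * z 0 := by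
  have hw : ∀ t : ℝ, HasDerivAt (fun t : ℝ => cexp (-lam * t) * z t) 0 t := fun t => by
    refine (((hasDerivAt_id t).ofReal_comp.const_mul (-lam)).cexp.mul (hz t)).congr_deriv ?_
    simp only [id, ofReal_one, mul_one]
    ring
  have hconst := is_const_of_deriv_eq_zero (fun s => (hw s).differentiableAt)
    (fun s => (hw s).deriv) t 0
  simp only [ofReal_zero, mul_zero, Complex.exp_zero, one_mul] at hconst
  rw [← hconst, ← mul_assoc, ← Complex.exp_add, show lam * (t : ℂ) + -lam * t = 0 by ring,
    Complex.exp_zero, one_mul]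

lemma eq_zero_of_hasDerivAt_of_bounded (h : lam.re ≠ 0) (hz : ∀ t, HasDerivAt z (lam * z t) t)
    (hb : ∃ C, ∀ t, ‖z t‖ ≤ C) : z = 0 := by
  obtain ⟨C, hC⟩ := hb
  suffices hz0 : z 0 = 0 by
    funext t
    rw [eq_exp_mul_of_hasDerivAt hz t, hz0, mul_zero, Pi.zero_apply]
  by_contra hz0
  have hpos : 0 < ‖z 0‖ := norm_pos_iff.2 hz0
  have hC1 : 0 < (C + 1) / ‖z 0‖ := div_pos (by linarith [hC 0]) hpos
  -- the time at which `‖e^{λt}‖ * ‖z 0‖ = C + 1`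
  set t₀ := Real.log ((C + 1) / ‖z 0‖) / lam.re
  have hnorm : ‖z t₀‖ = C + 1 := by
    rw [eq_exp_mul_of_hasDerivAt hz t₀, norm_mul, Complex.norm_exp, mul_re, ofReal_re,
      ofReal_im, mul_zero, sub_zero, mul_div_cancel₀ _ h, Real.exp_log hC1,
      div_mul_cancel₀ _ hpos.ne']
  linarith [hC t₀]

end LinearODE

/-- For `Re λ ≠ 0` and a bounded continuous `f`, the function
`x(t) = ∫_{−∞}^{∞} g_s(λ) f(t−s) ds` is well defined (the integral converges
absolutely), bounded, differentiable with `x′(t) = λ x(t) + f(t)`, and is the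
unique bounded solution of this equation. -/
theorem stmt_16 (lam : ℂ) (hre : lam.re ≠ 0)
    (f : ℝ → ℂ) (hf : Continuous f) (hfb : ∃ C : ℝ, ∀ t : ℝ, ‖f t‖ ≤ C)
    (x : ℝ → ℂ)
    (hx : ∀ t : ℝ, x t = ∫ s : ℝ, g s lam * f (t - s)) :
    (∀ t : ℝ, Integrable (fun s : ℝ => g s lam * f (t - s))) ∧
    (∃ C : ℝ, ∀ t : ℝ, ‖x t‖ ≤ C) ∧
    (∀ t : ℝ, HasDerivAt x (lam * x t + f t) t) ∧
    (∀ y : ℝ → ℂ, (∃ C : ℝ, ∀ t : ℝ, ‖y t‖ ≤ C) →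
      (∀ t : ℝ, HasDerivAt y (lam * y t + f t) t) → y = x) := by
  obtain ⟨C, hC⟩ := hfb
  obtain rfl : x = greenIntegral lam f := funext hx
  have hxb : ∀ t, ‖greenIntegral lam f t‖ ≤ (∫ s, ‖g s lam‖) * C :=
    norm_integral_mul_comp_sub_le (integrable_g hre) hC
  have hx' := hasDerivAt_greenIntegral hre hf hC
  refine ⟨integrable_mul_comp_sub (integrable_g hre) hf hC, ⟨_, hxb⟩, hx', ?_⟩
  rintro y ⟨Cy, hCy⟩ hy
  have hdiff := eq_zero_of_hasDerivAt_of_bounded hre (z := y - greenIntegral lam f)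
    (fun t => ((hy t).sub (hx' t)).congr_deriv (by rw [Pi.sub_apply]; ring))
    ⟨_, fun t => (norm_sub_le _ _).trans (add_le_add (hCy t) (hxb t))⟩
  exact sub_eq_zero.1 hdiff
end

section
/- Let 𝔸 be a complex unital Banach algebra and a, b, c ∈ 𝔸. Let A be the 2×2 matrix over 𝔸 given by A = [[a, 0], [b, c]] (lower triangular). Then for every t > 0 the matrix exponential exp(t·A) equals [[e^{ta}, 0], [E, e^{tc}]] where E = ∫_{0}^{t} e^{sc} · b · e^{(t−s)a} ds; that is, (exp(tA))_{11} = e^{ta}, (exp(tA))_{12} = 0, (exp(tA))_{22} = e^{tc}, and (exp(tA))_{21} = ∫_{0}^{t} e^{sc} b e^{(t−s)a} ds. -/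
/-!
Both `s ↦ exp (s • A)` and the candidate matrix `F s` solve `F' = F * A` with `F 0 = 1`; for the
candidate this is an entrywise computation, after writing its lower-left entry as
`(∫₀ˢ e^{uc} b e^{-ua} du) e^{sa}`. Uniqueness holds because `s ↦ F s * exp ((t - s) • A)` has
zero derivative.
-/

open NormedSpace MeasureTheory

section ExpUniqueness

variable {R : Type*} [NormedRing R] [NormedAlgebra ℝ R] [CompleteSpace R]

theorem eq_exp_smul_of_hasDerivAt_mul_const {F : ℝ → R} {A : R}
    (hF : ∀ s, HasDerivAt F (F s * A) s) (hF0 : F 0 = 1) (t : ℝ) :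
    F t = exp (t • A) := by
  have hΦ : ∀ s, HasDerivAt (fun s => F s * exp ((t - s) • A)) 0 s := by
    intro s
    have hE : HasDerivAt (fun s : ℝ => exp ((t - s) • A)) (-(A * exp ((t - s) • A))) s := by
      simpa [Function.comp_def] using
        (hasDerivAt_exp_smul_const' A (t - s)).scomp s ((hasDerivAt_id s).const_sub t)
    have := (hF s).mul hE
    rwa [mul_neg, mul_assoc, add_neg_cancel] at this
  simpa [hF0] using
    is_const_of_deriv_eq_zero (fun s => (hΦ s).differentiableAt) (fun s => (hΦ s).deriv) t 0

end ExpUniqueness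

section LowerLeftEntry

variable {𝔸 : Type*} [NormedRing 𝔸] [NormedAlgebra ℝ 𝔸] [CompleteSpace 𝔸]

theorem integral_exp_smul_mul_exp_sub_smul (a b c : 𝔸) (t : ℝ) :
    ∫ s in 0..t, exp (s • c) * b * exp ((t - s) • a) =
      (∫ s in 0..t, exp (s • c) * b * exp (-(s • a))) * exp (t • a) := by
  let +nondep : NormedAlgebra ℚ 𝔸 := NormedAlgebra.restrictScalars ℚ ℝ 𝔸
  have hint : IntervalIntegrable (fun s : ℝ => exp (s • c) * b * exp (-(s • a))) volume 0 t :=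
    (by fun_prop : Continuous fun s : ℝ => exp (s • c) * b * exp (-(s • a))).intervalIntegrable _ _
  have h := ((ContinuousLinearMap.mul ℝ 𝔸).flip (exp (t • a))).intervalIntegral_comp_comm hint
  simp only [ContinuousLinearMap.flip_apply, ContinuousLinearMap.mul_apply'] at h
  rw [← h]
  refine intervalIntegral.integral_congr fun s _ => ?_
  have hcomm : Commute (-(s • a)) (t • a) := (((Commute.refl a).smul_left s).smul_right t).neg_left
  rw [mul_assoc _ (exp _), ← exp_add_of_commute hcomm, ← neg_smul, ← add_smul, neg_add_eq_sub]

theorem hasDerivAt_integral_exp_smul_mul_exp_sub_smul (a b c : 𝔸) (t : ℝ) :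
    HasDerivAt (fun t : ℝ => ∫ s in 0..t, exp (s • c) * b * exp ((t - s) • a))
      ((∫ s in 0..t, exp (s • c) * b * exp ((t - s) • a)) * a + exp (t • c) * b) t := by
  let +nondep : NormedAlgebra ℚ 𝔸 := NormedAlgebra.restrictScalars ℚ ℝ 𝔸
  have hcont : Continuous fun s : ℝ => exp (s • c) * b * exp (-(s • a)) := by fun_prop
  have hG := intervalIntegral.integral_hasDerivAt_right (hcont.intervalIntegrable 0 t)
    (hcont.stronglyMeasurableAtFilter _ _) hcont.continuousAt
  have hinv : exp (-(t • a)) * exp (t • a) = 1 := by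
    rw [← exp_add_of_commute (Commute.refl _).neg_left, neg_add_cancel, exp_zero]
  simp_rw [integral_exp_smul_mul_exp_sub_smul]
  refine (hG.mul (hasDerivAt_exp_smul_const a t)).congr_deriv ?_
  rw [mul_assoc, mul_assoc, hinv, mul_one, mul_assoc, add_comm]

end LowerLeftEntry

namespace Matrix

open scoped Norms.Operator

theorem hasDerivAt_linftyOp_iff {𝕜 m n E : Type*} [NontriviallyNormedField 𝕜] [Fintype m]
    [Fintype n] [NormedAddCommGroup E] [NormedSpace 𝕜 E] {F : 𝕜 → Matrix m n E}
    {F' : Matrix m n E} {x : 𝕜} :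
    HasDerivAt F F' x ↔ ∀ i j, HasDerivAt (fun s => F s i j) (F' i j) x := by
  refine hasDerivAt_iff_tendsto_slope.trans ?_
  refine tendsto_pi_nhds.trans (forall_congr' fun i => ?_)
  refine tendsto_pi_nhds.trans (forall_congr' fun j => ?_)
  exact hasDerivAt_iff_tendsto_slope.symm

theorem exp_smul_lowerTriangular {𝔸 : Type*} [NormedRing 𝔸] [NormedAlgebra ℝ 𝔸]
    [CompleteSpace 𝔸] (a b c : 𝔸) (t : ℝ) :
    exp (t • !![a, 0; b, c]) =
      !![exp (t • a), 0; ∫ s in 0..t, exp (s • c) * b * exp ((t - s) • a), exp (t • c)] := by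
  -- instance search does not see that the operator-norm uniformity is the (complete) product one
  have : @CompleteSpace (Matrix (Fin 2) (Fin 2) 𝔸) PseudoMetricSpace.toUniformSpace :=
    inferInstanceAs (CompleteSpace (Fin 2 → Fin 2 → 𝔸))
  refine (eq_exp_smul_of_hasDerivAt_mul_const (F := fun t : ℝ =>
    !![exp (t • a), 0; ∫ s in 0..t, exp (s • c) * b * exp ((t - s) • a), exp (t • c)])
    (fun s => ?_) ?_ t).symm
  · refine hasDerivAt_linftyOp_iff.mpr fun i j => ?_
    fin_cases i <;> fin_cases j <;>
      simp [Matrix.mul_apply, hasDerivAt_const, hasDerivAt_exp_smul_const,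
        hasDerivAt_integral_exp_smul_mul_exp_sub_smul]
  · ext i j
    fin_cases i <;> fin_cases j <;> simp

end Matrix

theorem stmt_17_general {𝔸 : Type*} [NormedRing 𝔸] [NormedAlgebra ℂ 𝔸] [CompleteSpace 𝔸]
    (a b c : 𝔸) (A : Matrix (Fin 2) (Fin 2) 𝔸) (hA : A = !![a, 0; b, c])
    (t : ℝ) :
    (NormedSpace.exp ((t : ℂ) • A)) 0 0 = NormedSpace.exp ((t : ℂ) • a) ∧
    (NormedSpace.exp ((t : ℂ) • A)) 0 1 = 0 ∧
    (NormedSpace.exp ((t : ℂ) • A)) 1 1 = NormedSpace.exp ((t : ℂ) • c) ∧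
    (NormedSpace.exp ((t : ℂ) • A)) 1 0
      = ∫ s in (0 : ℝ)..t,
          NormedSpace.exp ((s : ℂ) • c) * b * NormedSpace.exp (((t - s : ℝ) : ℂ) • a) := by
  simp only [hA, Complex.coe_smul, Matrix.exp_smul_lowerTriangular]
  simp

/-- For a `2×2` lower triangular matrix `A = [[a, 0], [b, c]]` over a complex unital
Banach algebra and `t > 0`, the exponential `exp(tA)` has diagonal entries `e^{ta}`,
`e^{tc}`, zero upper entry, and lower entry `∫₀^t e^{sc} b e^{(t−s)a} ds`. -/
theorem stmt_17 {𝔸 : Type*} [NormedRing 𝔸] [NormedAlgebra ℂ 𝔸] [CompleteSpace 𝔸]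
    (a b c : 𝔸) (A : Matrix (Fin 2) (Fin 2) 𝔸) (hA : A = !![a, 0; b, c])
    (t : ℝ) (ht : 0 < t) :
    (NormedSpace.exp ((t : ℂ) • A)) 0 0 = NormedSpace.exp ((t : ℂ) • a) ∧
    (NormedSpace.exp ((t : ℂ) • A)) 0 1 = 0 ∧
    (NormedSpace.exp ((t : ℂ) • A)) 1 1 = NormedSpace.exp ((t : ℂ) • c) ∧
    (NormedSpace.exp ((t : ℂ) • A)) 1 0
      = ∫ s in (0 : ℝ)..t,
          NormedSpace.exp ((s : ℂ) • c) * b * NormedSpace.exp (((t - s : ℝ) : ℂ) • a) :=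
  stmt_17_general a b c A hA t
end

section
/- Let 𝔸 be a complex unital Banach algebra and let A be the 3×3 lower triangular matrix over 𝔸 with entries A = [[a₁₁, 0, 0], [a₂₁, a₂₂, 0], [a₃₁, a₃₂, a₃₃]]. Then for every t > 0 the (3,1) entry of the matrix exponential exp(t·A) equals ∫_{0}^{t} e^{s a₃₃} · a₃₁ · e^{(t−s) a₁₁} ds + ∫_{0}^{t} ∫_{0}^{r} e^{s a₃₃} · a₃₂ · e^{(r−s) a₂₂} · a₂₁ · e^{(t−r) a₁₁} ds dr. -/
/-!
Write `E(u) = exp(u • A)` with Lean's 0-based indices. Comparing entries in `E' = E * A`, the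
last row solves the triangular system `E₂₂' = E₂₂ a₃₃`, `E₂₁' = E₂₁ a₂₂ + E₂₂ a₃₂`,
`E₂₀' = E₂₀ a₁₁ + E₂₁ a₂₁ + E₂₂ a₃₁` with `E₂₂(0) = 1`, `E₂₁(0) = E₂₀(0) = 0`.
Variation of constants (`f' = f a + h` gives `f t = f 0 e^{ta} + ∫₀ᵗ h(s) e^{(t-s)a} ds`),
applied three times in turn, yields `e^{u a₃₃}`, then the single and then the double integral.
-/

open MeasureTheory NormedSpace

section LowerTriangularMul

variable {R : Type*} [NonUnitalNonAssocSemiring R] (a11 a21 a22 a31 a32 a33 : R)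
  (M : Matrix (Fin 3) (Fin 3) R) (i : Fin 3)

theorem mul_lowerTriangular_apply_two :
    (M * !![a11, 0, 0; a21, a22, 0; a31, a32, a33]) i 2 = M i 2 * a33 := by
  simp [Matrix.mul_apply, Fin.sum_univ_three]

theorem mul_lowerTriangular_apply_one :
    (M * !![a11, 0, 0; a21, a22, 0; a31, a32, a33]) i 1 = M i 1 * a22 + M i 2 * a32 := by
  simp [Matrix.mul_apply, Fin.sum_univ_three]

theorem mul_lowerTriangular_apply_zero :
    (M * !![a11, 0, 0; a21, a22, 0; a31, a32, a33]) i 0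
      = M i 0 * a11 + (M i 1 * a21 + M i 2 * a31) := by
  simp [Matrix.mul_apply, Fin.sum_univ_three, add_assoc]

end LowerTriangularMul

section BanachAlgebra

variable {𝔹 : Type*} [NormedRing 𝔹] [NormedAlgebra ℝ 𝔹] [CompleteSpace 𝔹]

theorem exp_smul_mul_exp_smul (a : 𝔹) (s t : ℝ) :
    exp (s • a) * exp (t • a) = exp ((s + t) • a) := by
  let _ : NormedAlgebra ℚ 𝔹 := .restrictScalars ℚ ℝ 𝔹
  rw [add_smul, exp_add_of_commute (((Commute.refl a).smul_left s).smul_right t)]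

@[fun_prop]
theorem Continuous.exp_smul {α : Type*} [TopologicalSpace α] {g : α → ℝ} (hg : Continuous g)
    (a : 𝔹) : Continuous fun x => exp (g x • a) :=
  (continuous_iff_continuousAt.2 fun s => (hasDerivAt_exp_smul_const a s).continuousAt).comp hg

theorem intervalIntegral.integral_mul_const_of_integrable {f : ℝ → 𝔹} {a b : ℝ}
    (hf : IntervalIntegrable f volume a b) (c : 𝔹) :
    ∫ x in a..b, f x * c = (∫ x in a..b, f x) * c :=
  ((ContinuousLinearMap.mul ℝ 𝔹).flip c).intervalIntegral_comp_comm hf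

theorem eq_mul_exp_add_integral_of_hasDerivAt {f h : ℝ → 𝔹} {a : 𝔹}
    (hf : ∀ u, HasDerivAt f (f u * a + h u) u) (hh : Continuous h) (t : ℝ) :
    f t = f 0 * exp (t • a) + ∫ s in 0..t, h s * exp ((t - s) • a) := by
  -- `f u * e^{-ua}` has derivative `h u * e^{-ua}` since `a` commutes with `e^{-ua}`.
  have hg : ∀ u, HasDerivAt (fun v => f v * exp (-v • a)) (h u * exp (-u • a)) u := by
    intro u
    have he : HasDerivAt (fun v : ℝ => exp (-v • a)) (-(exp (-u • a) * a)) u := by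
      simpa [Function.comp_def] using
        (hasDerivAt_exp_smul_const a (-u)).scomp u (hasDerivAt_neg u)
    convert (hf u).mul he using 1
    · rfl
    rw [((Commute.refl a).smul_left (-u)).exp_left]
    noncomm_ring
  have hint : IntervalIntegrable (fun s => h s * exp (-s • a)) volume 0 t := by
    apply Continuous.intervalIntegrable; fun_prop
  have hFTC := intervalIntegral.integral_eq_sub_of_hasDerivAt (fun s _ => hg s) hint
  calc f t = f t * exp (-t • a) * exp (t • a) := by
        rw [mul_assoc, exp_smul_mul_exp_smul, neg_add_cancel, zero_smul, exp_zero, mul_one]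
    _ = (f 0 + ∫ s in 0..t, h s * exp (-s • a)) * exp (t • a) := by
        rw [hFTC]; simp
    _ = f 0 * exp (t • a) + ∫ s in 0..t, h s * exp ((t - s) • a) := by
        rw [add_mul, ← intervalIntegral.integral_mul_const_of_integrable hint]
        simp only [mul_assoc, exp_smul_mul_exp_smul, neg_add_eq_sub]

section Matrix

attribute [local instance] Matrix.linftyOpNormedRing Matrix.linftyOpNormedAlgebra

variable {n : Type*} [Fintype n] [DecidableEq n]

theorem hasDerivAt_exp_smul_apply (A : Matrix n n 𝔹) (i j : n) (u : ℝ) :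
    HasDerivAt (fun v : ℝ => exp (v • A) i j) ((exp (u • A) * A) i j) u := by
  -- The `L∞` operator norm induces the product uniformity, but not reducibly so.
  have : @CompleteSpace (Matrix n n 𝔹) PseudoMetricSpace.toUniformSpace :=
    inferInstanceAs (CompleteSpace (n → n → 𝔹))
  let entry : Matrix n n 𝔹 →L[ℝ] 𝔹 :=
    (ContinuousLinearMap.proj (R := ℝ) (φ := fun _ : n => 𝔹) j).comp
      (ContinuousLinearMap.proj (R := ℝ) (φ := fun _ : n => n → 𝔹) i)
  exact entry.hasFDerivAt.comp_hasDerivAt u (hasDerivAt_exp_smul_const A u)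

end Matrix

section LowerTriangularExp

variable (a11 a21 a22 a31 a32 a33 : 𝔹) (u : ℝ)

local notation "L" => !![a11, 0, 0; a21, a22, 0; a31, a32, a33]

theorem exp_smul_lowerTriangular_two_two : exp (u • L) 2 2 = exp (u • a33) := by
  have hd (s : ℝ) : HasDerivAt (fun v : ℝ => exp (v • L) 2 2) (exp (s • L) 2 2 * a33 + 0) s := by
    simpa only [mul_lowerTriangular_apply_two, add_zero] using hasDerivAt_exp_smul_apply L 2 2 s
  simpa using eq_mul_exp_add_integral_of_hasDerivAt hd continuous_const u

theorem exp_smul_lowerTriangular_two_one :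
    exp (u • L) 2 1 = ∫ s in 0..u, exp (s • a33) * a32 * exp ((u - s) • a22) := by
  have hd (s : ℝ) : HasDerivAt (fun v : ℝ => exp (v • L) 2 1)
      (exp (s • L) 2 1 * a22 + exp (s • a33) * a32) s := by
    simpa only [mul_lowerTriangular_apply_one, exp_smul_lowerTriangular_two_two]
      using hasDerivAt_exp_smul_apply L 2 1 s
  simpa using eq_mul_exp_add_integral_of_hasDerivAt hd (by fun_prop) u

theorem continuous_exp_smul_lowerTriangular_two_one :
    Continuous fun s : ℝ => exp (s • L) 2 1 :=
  continuous_iff_continuousAt.2 fun s => (hasDerivAt_exp_smul_apply L 2 1 s).continuousAt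

theorem exp_smul_lowerTriangular_two_zero_eq_integral :
    exp (u • L) 2 0
      = ∫ s in 0..u, (exp (s • L) 2 1 * a21 + exp (s • a33) * a31) * exp ((u - s) • a11) := by
  have hd (s : ℝ) : HasDerivAt (fun v : ℝ => exp (v • L) 2 0)
      (exp (s • L) 2 0 * a11 + (exp (s • L) 2 1 * a21 + exp (s • a33) * a31)) s := by
    simpa only [mul_lowerTriangular_apply_zero, exp_smul_lowerTriangular_two_two]
      using hasDerivAt_exp_smul_apply L 2 0 s
  have := eq_mul_exp_add_integral_of_hasDerivAt hd
    (((continuous_exp_smul_lowerTriangular_two_one ..).mul continuous_const).add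
      ((continuous_id.exp_smul a33).mul continuous_const)) u
  rwa [zero_smul, exp_zero, Matrix.one_apply_ne (by decide), zero_mul, zero_add] at this

theorem exp_smul_lowerTriangular_two_zero :
    exp (u • L) 2 0
      = (∫ s in 0..u, exp (s • a33) * a31 * exp ((u - s) • a11))
        + ∫ r in 0..u, ∫ s in 0..r,
            exp (s • a33) * a32 * exp ((r - s) • a22) * a21 * exp ((u - r) • a11) := by
  have h21 : IntervalIntegrable (fun s : ℝ => exp (s • L) 2 1 * a21 * exp ((u - s) • a11))
      volume 0 u :=
    (((continuous_exp_smul_lowerTriangular_two_one ..).mul continuous_const).mul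
      (by fun_prop)).intervalIntegrable 0 u
  have h31 : IntervalIntegrable (fun s : ℝ => exp (s • a33) * a31 * exp ((u - s) • a11))
      volume 0 u := by
    apply Continuous.intervalIntegrable; fun_prop
  simp only [exp_smul_lowerTriangular_two_zero_eq_integral, add_mul]
  rw [intervalIntegral.integral_add h21 h31, add_comm]
  congr 1
  refine intervalIntegral.integral_congr fun r _ => ?_
  have h32 : IntervalIntegrable (fun s : ℝ => exp (s • a33) * a32 * exp ((r - s) • a22))
      volume 0 r := by
    apply Continuous.intervalIntegrable; fun_prop
  rw [exp_smul_lowerTriangular_two_one, ← intervalIntegral.integral_mul_const_of_integrable h32,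
    ← intervalIntegral.integral_mul_const_of_integrable (h32.mul_const a21)]

end LowerTriangularExp

end BanachAlgebra

theorem stmt_18_general {𝔸 : Type*} [NormedRing 𝔸] [NormedAlgebra ℂ 𝔸] [CompleteSpace 𝔸]
    (a11 a21 a22 a31 a32 a33 : 𝔸) (A : Matrix (Fin 3) (Fin 3) 𝔸)
    (hA : A = !![a11, 0, 0; a21, a22, 0; a31, a32, a33])
    (t : ℝ) :
    (NormedSpace.exp ((t : ℂ) • A)) 2 0
      = (∫ s in (0 : ℝ)..t,
          NormedSpace.exp ((s : ℂ) • a33) * a31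
            * NormedSpace.exp (((t - s : ℝ) : ℂ) • a11))
        + ∫ r in (0 : ℝ)..t, ∫ s in (0 : ℝ)..r,
            NormedSpace.exp ((s : ℂ) • a33) * a32
              * NormedSpace.exp (((r - s : ℝ) : ℂ) • a22) * a21
              * NormedSpace.exp (((t - r : ℝ) : ℂ) • a11) := by
  subst hA
  simp only [Complex.coe_smul]
  exact exp_smul_lowerTriangular_two_zero ..

/-- For a `3×3` lower triangular matrix `A` over a complex unital Banach algebra and
`t > 0`, the `(3,1)` entry of `exp(tA)` is
`∫₀^t e^{s a₃₃} a₃₁ e^{(t−s) a₁₁} ds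
  + ∫₀^t ∫₀^r e^{s a₃₃} a₃₂ e^{(r−s) a₂₂} a₂₁ e^{(t−r) a₁₁} ds dr`. -/
theorem stmt_18 {𝔸 : Type*} [NormedRing 𝔸] [NormedAlgebra ℂ 𝔸] [CompleteSpace 𝔸]
    (a11 a21 a22 a31 a32 a33 : 𝔸) (A : Matrix (Fin 3) (Fin 3) 𝔸)
    (hA : A = !![a11, 0, 0; a21, a22, 0; a31, a32, a33])
    (t : ℝ) (ht : 0 < t) :
    (NormedSpace.exp ((t : ℂ) • A)) 2 0
      = (∫ s in (0 : ℝ)..t,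
          NormedSpace.exp ((s : ℂ) • a33) * a31
            * NormedSpace.exp (((t - s : ℝ) : ℂ) • a11))
        + ∫ r in (0 : ℝ)..t, ∫ s in (0 : ℝ)..r,
            NormedSpace.exp ((s : ℂ) • a33) * a32
              * NormedSpace.exp (((r - s : ℝ) : ℂ) • a22) * a21
              * NormedSpace.exp (((t - r : ℝ) : ℂ) • a11) :=
  stmt_18_general a11 a21 a22 a31 a32 a33 A hA t
end
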